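/- arXiv:2211.03924 — 2 statements merged into one kernel-verified Lean document; each statement's English description precedes it below -/
import Mathlib

section
/- Let V be a vector space of dimension n over a field of characteristic zero. If r ≤ n, then the algebra homomorphism from the group algebra K[Sym_r] to End(V^{⊗r}) given by place permutations is injective. -/
/-!
Fix vectors `v i` with coordinate functionals `f i` such that `f i (v j) = δ i j` (for `V` of
dimension `n ≥ r`, take `r` distinct vectors of a basis). The functional
`⨂ x i ↦ ∏ f (w₀⁻¹ i) (x i)` sends `w • ⨂ v i = ⨂ v (w⁻¹ i)` to `δ w w₀`, so applied to
`x • ⨂ v i` it reads off the coefficient of `w₀` in `x`. Hence `x` acts by zero only if `x = 0`.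
-/

open scoped TensorProduct

namespace PiTensorProduct

variable {R ι : Type*} [CommRing R] [Fintype ι]

def dualTprod {M : ι → Type*} [∀ i, AddCommGroup (M i)] [∀ i, Module R (M i)]
    (f : ∀ i, Module.Dual R (M i)) : Module.Dual R (⨂[R] i, M i) :=
  lift ((MultilinearMap.mkPiAlgebra R ι R).compLinearMap f)

@[simp]
theorem dualTprod_tprod {M : ι → Type*} [∀ i, AddCommGroup (M i)] [∀ i, Module R (M i)]
    (f : ∀ i, Module.Dual R (M i)) (x : ∀ i, M i) :
    dualTprod f (⨂ₜ[R] i, x i) = ∏ i, f i (x i) := by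
  simp [dualTprod]

variable [DecidableEq ι] {M : Type*} [AddCommGroup M] [Module R M]

theorem prod_biorthogonal_perm {v : ι → M} {f : ι → Module.Dual R M}
    (hfv : ∀ i j, f i (v j) = if j = i then 1 else 0) (w w₀ : Equiv.Perm ι) :
    ∏ i, f (w₀⁻¹ i) (v (w⁻¹ i)) = if w = w₀ then 1 else 0 := by
  split_ifs with h
  · subst h
    simp [hfv]
  · obtain ⟨i, hi⟩ : ∃ i, w⁻¹ i ≠ w₀⁻¹ i := by
      by_contra! hc
      exact h (inv_injective (Equiv.ext hc))
    exact Finset.prod_eq_zero (Finset.mem_univ i) (by rw [hfv, if_neg hi])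

theorem injective_of_place_perm_of_biorthogonal
    (μ : MonoidAlgebra R (Equiv.Perm ι) →ₗ[R] Module.End R (⨂[R] _ : ι, M))
    (hμ : ∀ (w : Equiv.Perm ι) (x : ι → M),
      μ (MonoidAlgebra.of R (Equiv.Perm ι) w) (⨂ₜ[R] i, x i) = ⨂ₜ[R] i, x (w⁻¹ i))
    {v : ι → M} {f : ι → Module.Dual R M} (hfv : ∀ i j, f i (v j) = if j = i then 1 else 0) :
    Function.Injective μ := by
  have coeff_eq (x : MonoidAlgebra R (Equiv.Perm ι)) (w₀ : Equiv.Perm ι) :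
      dualTprod (fun i ↦ f (w₀⁻¹ i)) (μ x (⨂ₜ[R] i, v i)) = x.coeff w₀ := by
    induction x using MonoidAlgebra.induction_linear with
    | zero => simp
    | add x y hx hy =>
      rw [map_add, LinearMap.add_apply, map_add, hx, hy, MonoidAlgebra.coeff_add,
        Finsupp.add_apply]
    | single w r =>
      rw [MonoidAlgebra.coeff_single, Finsupp.single_apply, ← MonoidAlgebra.smul_of, map_smul,
        LinearMap.smul_apply, hμ, map_smul, dualTprod_tprod, prod_biorthogonal_perm hfv]
      simp [eq_comm]
  rw [← LinearMap.ker_eq_bot, LinearMap.ker_eq_bot']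
  intro x hx
  ext w₀
  simpa [hx] using (coeff_eq x w₀).symm

end PiTensorProduct

theorem stmt_2_general (K V : Type*) [Field K] [AddCommGroup V] [Module K V]
    [FiniteDimensional K V] (n r : ℕ) (hn : Module.finrank K V = n) (hr : r ≤ n)
    (μ : MonoidAlgebra K (Equiv.Perm (Fin r)) →ₐ[K] Module.End K (⨂[K] (_ : Fin r), V))
    (hμ : ∀ (w : Equiv.Perm (Fin r)) (v : Fin r → V),
      μ (MonoidAlgebra.of K (Equiv.Perm (Fin r)) w) (⨂ₜ[K] i, v i) = ⨂ₜ[K] i, v (w⁻¹ i)) :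
    Function.Injective μ := by
  let b : Module.Basis (Fin n) K V := Module.finBasisOfFinrankEq K V hn
  refine PiTensorProduct.injective_of_place_perm_of_biorthogonal μ.toLinearMap hμ
    (v := fun i ↦ b (Fin.castLE hr i)) (f := fun i ↦ b.coord (Fin.castLE hr i)) fun i j ↦ ?_
  simp only [Module.Basis.coord_apply, b.repr_self_apply, (Fin.castLE_injective hr).eq_iff]

theorem stmt_2 (K V : Type*) [Field K] [CharZero K] [AddCommGroup V] [Module K V]
    [FiniteDimensional K V] (n r : ℕ) (hn : Module.finrank K V = n) (hr : r ≤ n)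
    (μ : MonoidAlgebra K (Equiv.Perm (Fin r)) →ₐ[K] Module.End K (⨂[K] (_ : Fin r), V))
    (hμ : ∀ (w : Equiv.Perm (Fin r)) (v : Fin r → V),
      μ (MonoidAlgebra.of K (Equiv.Perm (Fin r)) w) (⨂ₜ[K] i, v i) = ⨂ₜ[K] i, v (w⁻¹ i)) :
    Function.Injective μ :=
  stmt_2_general K V n r hn hr μ hμ
end

section
/- For every integer n ≥ 1, Σ_{k=0}^{⌊(n+1)/2⌋} (−1)^k · C(n, k) · C(2n−2k, n−1) = 0, where C denotes binomial coefficients. -/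
open Polynomial Finset

lemma stmt_18_aux (n : ℕ) (hn : 1 ≤ n) :
    ∑ k ∈ range (n+1), ((-1:ℤ)^k * n.choose k * ((2*(n-k)).choose (n-1))) = 0 := by
  have key : (((1 + X)^2 - 1 : ℤ[X])^n).coeff (n-1)
      = ∑ k ∈ range (n+1), ((-1:ℤ)^k * n.choose k * ((2*(n-k)).choose (n-1))) := by
    rw [sub_pow, Polynomial.finset_sum_coeff, ← Finset.sum_range_reflect]
    apply Finset.sum_congr rfl
    intro m hm
    rw [Finset.mem_range] at hm
    have h1 : n + 1 - 1 - m = n - m := by omega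
    rw [h1]
    have h2 : (-1:ℤ[X])^(n-m+n) = (-1)^m := by
      rw [show n-m+n = 2*(n-m)+m by omega, pow_add, pow_mul]; simp
    rw [Nat.choose_symm (by omega : m ≤ n), h2]
    simp only [one_pow, mul_one, ← pow_mul]
    rw [← C_eq_natCast, coeff_mul_C,
      show ((-1:ℤ[X])^m) = C ((-1)^m) by simp, coeff_C_mul, coeff_one_add_X_pow]
    ring
  have zero : (((1 + X)^2 - 1 : ℤ[X])^n).coeff (n-1) = 0 := by
    have : ((1 + X)^2 - 1 : ℤ[X]) = (X + 2) * X := by ring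
    rw [this, mul_pow, coeff_mul_X_pow']
    simp [show ¬ n ≤ n - 1 by omega]
  rw [← key, zero]

theorem stmt_18 (n : ℕ) (hn : 1 ≤ n) :
    ∑ k ∈ Finset.range ((n + 1) / 2 + 1),
      ((-1 : ℤ) ^ k * (n.choose k) * ((2 * n - 2 * k).choose (n - 1))) = 0 := by
  have haux := stmt_18_aux n hn
  have heq : ∀ k ∈ Finset.range ((n + 1) / 2 + 1),
      ((-1 : ℤ) ^ k * (n.choose k) * ((2 * n - 2 * k).choose (n - 1)))
      = ((-1 : ℤ) ^ k * (n.choose k) * ((2 * (n - k)).choose (n - 1))) := by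
    intro k hk
    rw [Finset.mem_range] at hk
    congr 3
    omega
  rw [Finset.sum_congr rfl heq, ← haux]
  apply Finset.sum_subset
  · intro k hk
    rw [Finset.mem_range] at *
    omega
  · intro k hk hk'
    rw [Finset.mem_range] at *
    have h : (2*(n-k)).choose (n-1) = 0 := by
      apply Nat.choose_eq_zero_of_lt; omega
    simp [h]
end
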